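/- arXiv:2205.15967 — 5 statements merged into one kernel-verified Lean document; each statement's English description precedes it below -/
import Mathlib

section
/- In the gambling MDP with data-collection policy choosing each of a₀, a₁, a₂ with probability 1/3, the conditional distribution of the action given that the realized return equals 1 assigns probability 1/3 to a₁ and 2/3 to a₂, and the expected return of the return-conditioned policy (which samples an action from this conditional distribution and executes it in the true environment) is (1/3)·(−5/2) + (2/3)·1 = −1/6. -/
namespace Stmt3
inductive Act | a0 | a1 | a2
  deriving DecidableEq

instance instFintypeAct : Fintype Act :=
  ⟨({.a0, .a1, .a2} : Finset Act), by intro x; cases x <;> simp⟩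

noncomputable def rewardP : Act → ℝ → ℝ
  | .a0, r => if r = 5 then 1/2 else if r = -15 then 1/2 else 0
  | .a1, r => if r = 1 then 1/2 else if r = -6 then 1/2 else 0
  | .a2, r => if r = 1 then 1 else 0

noncomputable def expRet (a : Act) : ℝ :=
  ∑ r ∈ ({5, -15, 1, -6} : Finset ℝ), rewardP a r * r

/-- Joint distribution over (action, reward) induced by the uniform data policy. -/
noncomputable def joint (a : Act) (r : ℝ) : ℝ := (1/3) * rewardP a r

/-- The return-conditioned policy: `π(a) = P(action = a | reward = 1)`. -/
noncomputable def condPolicy (a : Act) : ℝ := joint a 1 / ∑ b : Act, joint b 1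

theorem Act.sum_univ {M : Type*} [AddCommMonoid M] (f : Act → M) :
    ∑ a : Act, f a = f .a0 + f .a1 + f .a2 := by
  rw [Fintype.sum_eq_add_sum_compl Act.a0, add_assoc]
  congr 1
  have : ({Act.a0}ᶜ : Finset Act) = {.a1, .a2} := by decide
  simp [this]

theorem expRet_a1 : expRet .a1 = -5/2 := by norm_num [expRet, rewardP, Finset.sum_insert]

theorem expRet_a2 : expRet .a2 = 1 := by norm_num [expRet, rewardP, Finset.sum_insert]

theorem sum_joint_one : ∑ b : Act, joint b 1 = 1/2 := by
  norm_num [Act.sum_univ, joint, rewardP]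

theorem condPolicy_eq (a : Act) : condPolicy a = 2 * rewardP a 1 / 3 := by
  rw [condPolicy, sum_joint_one, joint]
  ring

theorem condPolicy_a0 : condPolicy .a0 = 0 := by norm_num [condPolicy_eq, rewardP]

theorem condPolicy_a1 : condPolicy .a1 = 1/3 := by norm_num [condPolicy_eq, rewardP]

theorem condPolicy_a2 : condPolicy .a2 = 2/3 := by norm_num [condPolicy_eq, rewardP]

theorem stmt_3 :
    condPolicy .a0 = 0 ∧ condPolicy .a1 = 1/3 ∧ condPolicy .a2 = 2/3 ∧
    ∑ a : Act, condPolicy a * expRet a = (1/3) * (-5/2) + (2/3) * 1 ∧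
    ∑ a : Act, condPolicy a * expRet a = -1/6 := by
  have expected_return : ∑ a : Act, condPolicy a * expRet a = (1/3) * (-5/2) + (2/3) * 1 := by
    rw [Act.sum_univ, condPolicy_a0, condPolicy_a1, condPolicy_a2, expRet_a1, expRet_a2]
    ring
  exact ⟨condPolicy_a0, condPolicy_a1, condPolicy_a2, expected_return, by
    rw [expected_return]; norm_num⟩

end Stmt3
end

section
/- Let p be a probability mass function on pairs (a, s) ∈ A × S (finite sets), representing a joint distribution of action and next state, and let Z : A × S → G be a statistic. Fix z with p(Z = z) > 0. If the next state is conditionally independent of the event {Z = z} given each action a (i.e., p(s | a, Z = z) = p(s | a) for all a with p(a, Z = z) > 0), and the statistic Z depends only on (a, s), then the distribution of trajectories generated by executing the conditional policy π(a) = p(a | Z = z) in the true environment p(s | a) equals the conditional trajectory distribution p(a, s | Z = z). -/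
open Finset

/-- Finite single-step decision process: joint pmf `p (a, s) = pA a * pS a s`;
statistic `Z : A × S → G`.  If next states are conditionally independent of the
event `{Z = z}` given each action, then the rollout distribution
`q (a, s) = π a * pS a s` of the conditional policy `π a = p(a | Z = z)` equals
the conditional trajectory distribution `p(a, s | Z = z)`. -/
theorem stmt_5 {A S G : Type*} [Fintype A] [Fintype S] [DecidableEq G]
    (pA : A → ℝ) (pS : A → S → ℝ) (Z : A × S → G) (z : G)
    (hpA : ∀ a, 0 ≤ pA a) (hpAsum : ∑ a, pA a = 1)
    (hpS : ∀ a s, 0 ≤ pS a s) (hpSsum : ∀ a, ∑ s, pS a s = 1)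
    -- joint pmf
    (p : A → S → ℝ) (hp : ∀ a s, p a s = pA a * pS a s)
    -- P(action = a ∧ Z = z) and P(Z = z)
    (pz : A → ℝ) (hpz : ∀ a, pz a = ∑ s, if Z (a, s) = z then p a s else 0)
    (Pz : ℝ) (hPz : Pz = ∑ a, pz a)
    (hPzpos : 0 < Pz)
    -- conditional independence: p(s | a, Z = z) = p(s | a) wherever defined
    (hind : ∀ a, 0 < pz a → ∀ s, (if Z (a, s) = z then p a s else 0) / pz a = pS a s) :
    -- rollout q(a, s) = p(a | Z = z) · p(s | a) equals p(a, s | Z = z)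
    ∀ a s, (pz a / Pz) * pS a s = (if Z (a, s) = z then p a s else 0) / Pz := by
  intro a s
  have hnn : ∀ s', 0 ≤ (if Z (a, s') = z then p a s' else 0) := by
    intro s'
    split
    · rw [hp]; exact mul_nonneg (hpA a) (hpS a s')
    · exact le_refl 0
  rcases lt_or_eq_of_le (by rw [hpz a]; exact Finset.sum_nonneg fun s' _ => hnn s' : (0:ℝ) ≤ pz a) with hpos | hzero
  · have := hind a hpos s
    have h2 : (if Z (a, s) = z then p a s else 0) = pz a * pS a s := by
      field_simp at this
      linarith [this]
    rw [h2]; ring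
  · have hterm : (if Z (a, s) = z then p a s else 0) = 0 := by
      have hsum : ∑ s', (if Z (a, s') = z then p a s' else 0) = 0 := by
        rw [← hpz a, ← hzero]
      exact (Finset.sum_eq_zero_iff_of_nonneg (fun s' _ => hnn s')).mp hsum s (Finset.mem_univ s)
    rw [hterm, ← hzero]
    simp
end

section
/- Under the hypotheses of the previous statement (single-step process, statistic Z independent of next-state transitions given actions), the rollout of the conditional policy π(a) = p(a | Z = z) achieves Z = z almost surely: for every (a, s) with q(a, s) > 0 we have Z(a, s) = z, where q(a, s) = π(a) · p(s | a). -/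
open Finset

/-- Finite single-step decision process: joint pmf `p (a, s) = pA a * pS a s`;
statistic `Z : A × S → G`.  If next states are conditionally independent of the
event `{Z = z}` given each action, then the rollout
`q (a, s) = π a * pS a s` of the conditional policy `π a = p(a | Z = z)`
achieves `Z = z` almost surely. -/
theorem stmt_6 {A S G : Type*} [Fintype A] [Fintype S] [DecidableEq G]
    (pA : A → ℝ) (pS : A → S → ℝ) (Z : A × S → G) (z : G)
    (hpA : ∀ a, 0 ≤ pA a) (hpAsum : ∑ a, pA a = 1)
    (hpS : ∀ a s, 0 ≤ pS a s) (hpSsum : ∀ a, ∑ s, pS a s = 1)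
    -- joint pmf
    (p : A → S → ℝ) (hp : ∀ a s, p a s = pA a * pS a s)
    -- P(action = a ∧ Z = z) and P(Z = z)
    (pz : A → ℝ) (hpz : ∀ a, pz a = ∑ s, if Z (a, s) = z then p a s else 0)
    (Pz : ℝ) (hPz : Pz = ∑ a, pz a)
    (hPzpos : 0 < Pz)
    -- conditional independence: p(s | a, Z = z) = p(s | a) wherever defined
    (hind : ∀ a, 0 < pz a → ∀ s, (if Z (a, s) = z then p a s else 0) / pz a = pS a s) :
    -- the rollout of the conditional policy achieves Z = z almost surely
    ∀ a s, 0 < (pz a / Pz) * pS a s → Z (a, s) = z := by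
  intro a s hq
  have hpz0 : 0 ≤ pz a := by
    rw [hpz]
    refine Finset.sum_nonneg fun t _ => ?_
    split
    · rw [hp]; exact mul_nonneg (hpA a) (hpS a t)
    · exact le_refl 0
  have hpzpos : 0 < pz a := by
    rcases hpz0.lt_or_eq with h | h
    · exact h
    · exfalso
      rw [← h, zero_div, zero_mul] at hq
      exact lt_irrefl 0 hq
  have hpSpos : 0 < pS a s := by
    by_contra h
    have : (pz a / Pz) * pS a s ≤ 0 :=
      mul_nonpos_of_nonneg_of_nonpos (div_nonneg hpz0 hPzpos.le) (not_lt.mp h)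
    exact absurd hq (not_lt.mpr this)
  have h := hind a hpzpos s
  rw [← h] at hpSpos
  by_contra hne
  rw [if_neg hne, zero_div] at hpSpos
  exact lt_irrefl 0 hpSpos
end

section
/- Conversely, in the finite single-step setting: if the rollout distribution q(a, s) = p(a | Z = z) · p(s | a) of the conditional policy achieves Z = z almost surely (q(a,s) > 0 implies Z(a,s) = z), then q equals the conditional distribution p(·, · | Z = z), and hence p(s | a, Z = z) = p(s | a) for every a with p(a, Z = z) > 0. -/
open Finset

/-- Converse direction in the finite single-step setting: if the rollout
`q (a, s) = p(a | Z = z) * p(s | a)` of the conditional policy achieves `Z = z`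
almost surely, then `q` equals the conditional distribution `p(·,· | Z = z)`,
and hence `p(s | a, Z = z) = p(s | a)` for every `a` with `p(a, Z = z) > 0`. -/
theorem stmt_7 {A S G : Type*} [Fintype A] [Fintype S] [DecidableEq G]
    (pA : A → ℝ) (pS : A → S → ℝ) (Z : A × S → G) (z : G)
    (hpA : ∀ a, 0 ≤ pA a) (hpAsum : ∑ a, pA a = 1)
    (hpS : ∀ a s, 0 ≤ pS a s) (hpSsum : ∀ a, ∑ s, pS a s = 1)
    (p : A → S → ℝ) (hp : ∀ a s, p a s = pA a * pS a s)
    (pz : A → ℝ) (hpz : ∀ a, pz a = ∑ s, if Z (a, s) = z then p a s else 0)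
    (Pz : ℝ) (hPz : Pz = ∑ a, pz a)
    (hPzpos : 0 < Pz)
    -- the rollout achieves Z = z almost surely
    (hach : ∀ a s, 0 < (pz a / Pz) * pS a s → Z (a, s) = z) :
    (∀ a s, (pz a / Pz) * pS a s = (if Z (a, s) = z then p a s else 0) / Pz) ∧
    (∀ a, 0 < pz a → ∀ s, (if Z (a, s) = z then p a s else 0) / pz a = pS a s) := by
  have hterm : ∀ a s, 0 ≤ (if Z (a, s) = z then p a s else 0) := by
    intro a s
    split
    · exact (hp a s) ▸ mul_nonneg (hpA a) (hpS a s)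
    · exact le_refl 0
  have hpznn : ∀ a, 0 ≤ pz a := fun a => (hpz a) ▸
    Finset.sum_nonneg (fun s _ => hterm a s)
  have key : ∀ a s, pz a * pS a s = if Z (a, s) = z then p a s else 0 := by
    intro a s
    rcases (hpznn a).lt_or_eq with hpos | heq
    · -- pz a > 0
      rcases (hpS a s).lt_or_eq with hspos | hszero
      · have hz : Z (a, s) = z := hach a s (mul_pos (div_pos hpos hPzpos) hspos)
        rw [if_pos hz, hp]
        have hpa : pz a = pA a := by
          rw [hpz a]
          have : ∀ s', (if Z (a, s') = z then p a s' else 0) = pA a * pS a s' := by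
            intro s'
            rcases (hpS a s').lt_or_eq with h' | h'
            · rw [if_pos (hach a s' (mul_pos (div_pos hpos hPzpos) h')), hp]
            · rw [← h', mul_zero]
              split
              · rw [hp, ← h', mul_zero]
              · rfl
          rw [Finset.sum_congr rfl (fun s' _ => this s'), ← Finset.mul_sum,
            hpSsum, mul_one]
        rw [hpa]
      · rw [← hszero, mul_zero]
        split
        · rw [hp, ← hszero, mul_zero]
        · rfl
    · -- pz a = 0
      have hall := (Finset.sum_eq_zero_iff_of_nonneg
        (fun s' _ => hterm a s')).mp ((hpz a).symm.trans heq.symm)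
      rw [← heq, zero_mul]; exact (hall s (Finset.mem_univ s)).symm
  constructor
  · intro a s
    rw [div_mul_eq_mul_div, key a s]
  · intro a ha s
    rw [← key a s, mul_comm, mul_div_assoc, div_self (ne_of_gt ha), mul_one]
end

section
/- Let p be a pmf on trajectories of length T in a finite MDP, generated by a (history-dependent) data policy: p(τ) = ∏_t π_D(a_t | h_t) · P(s_{t+1} | h_t, a_t), where h_t is the history up to time t. Let I be a trajectory statistic with p(I = z) > 0, and suppose for all t and all histories, P(s_{t+1} | h_t, a_t, I = z) = P(s_{t+1} | h_t, a_t) wherever the conditional is defined. Then the trajectory distribution obtained by executing the history-conditioned policy π(a_t | h_t) := p(a_t | h_t, I = z) in the true environment equals p(τ | I = z), and consequently every trajectory of positive probability under this rollout satisfies I(τ) = z. -/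
namespace Stmt10

open scoped Classical

/-- A length-`T` trajectory `(s₀, a₀, s₁, …, s_T)` in a finite MDP. -/
abbrev Traj (S A : Type) (T : ℕ) := (Fin (T + 1) → S) × (Fin T → A)

/-- Probability of an event under a pmf `p` on trajectories. -/
noncomputable def pr {S A : Type} [Fintype S] [Fintype A] {T : ℕ}
    (p : Traj S A T → ℝ) (E : Traj S A T → Prop) : ℝ :=
  ∑ τ, if E τ then p τ else 0

/-- `τ'` agrees with `τ` on the history `h_t = (s₀, a₀, …, a_{t-1}, s_t)`. -/
def histEq {S A : Type} {T : ℕ} (τ τ' : Traj S A T) (t : ℕ) : Prop :=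
  (∀ i : Fin (T + 1), (i : ℕ) ≤ t → τ'.1 i = τ.1 i) ∧
  (∀ j : Fin T, (j : ℕ) < t → τ'.2 j = τ.2 j)

/-- `τ'` agrees with `τ` on the history `h_t` together with the action `a_t`. -/
def histActEq {S A : Type} {T : ℕ} (τ τ' : Traj S A T) (t : ℕ) : Prop :=
  histEq τ τ' t ∧ ∀ j : Fin T, (j : ℕ) ≤ t → τ'.2 j = τ.2 j

/-- True environment transition `P(s_{t+1} = s' | h_t, a_t)` along `τ`. -/
noncomputable def trans {S A : Type} [Fintype S] [Fintype A] {T : ℕ}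
    (p : Traj S A T → ℝ) (τ : Traj S A T) (t : Fin T) (s' : S) : ℝ :=
  pr p (fun τ' => histActEq τ τ' t ∧ τ'.1 t.succ = s') /
    pr p (fun τ' => histActEq τ τ' t)

/-- Conditioned transition `P(s_{t+1} = s' | h_t, a_t, I = z)` along `τ`. -/
noncomputable def transCond {S A G : Type} [Fintype S] [Fintype A] {T : ℕ}
    (p : Traj S A T → ℝ) (I : Traj S A T → G) (z : G)
    (τ : Traj S A T) (t : Fin T) (s' : S) : ℝ :=
  pr p (fun τ' => histActEq τ τ' t ∧ I τ' = z ∧ τ'.1 t.succ = s') /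
    pr p (fun τ' => histActEq τ τ' t ∧ I τ' = z)

/-- History-conditioned RvS policy `π(a_t = a | h_t, I = z)` along `τ`. -/
noncomputable def condPolicy {S A G : Type} [Fintype S] [Fintype A] {T : ℕ}
    (p : Traj S A T → ℝ) (I : Traj S A T → G) (z : G)
    (τ : Traj S A T) (t : Fin T) (a : A) : ℝ :=
  pr p (fun τ' => histEq τ τ' t ∧ I τ' = z ∧ τ'.2 t = a) /
    pr p (fun τ' => histEq τ τ' t ∧ I τ' = z)

/-- Distribution over trajectories obtained by executing the conditional policy
in the true environment, starting from state `s0`. -/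
noncomputable def rollout {S A G : Type} [Fintype S] [Fintype A] {T : ℕ}
    (p : Traj S A T → ℝ) (I : Traj S A T → G) (z : G) (s0 : S)
    (τ : Traj S A T) : ℝ :=
  (if τ.1 0 = s0 then 1 else 0) *
    ∏ t : Fin T, condPolicy p I z τ t (τ.2 t) * trans p τ t (τ.1 t.succ)

section Aux

variable {S A G : Type} [Fintype S] [Fintype A] {T : ℕ}

lemma pr_nonneg (p : Traj S A T → ℝ) (hp : ∀ τ, 0 ≤ p τ)
    (E : Traj S A T → Prop) : 0 ≤ pr p E := by
  apply Finset.sum_nonneg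
  intro τ _
  split <;> simp [hp τ]

lemma pr_mono (p : Traj S A T → ℝ) (hp : ∀ τ, 0 ≤ p τ)
    {E F : Traj S A T → Prop} (h : ∀ τ, E τ → F τ) : pr p E ≤ pr p F := by
  apply Finset.sum_le_sum
  intro τ _
  by_cases hE : E τ
  · simp [hE, h τ hE]
  · rw [if_neg hE]
    split <;> simp [hp τ]

lemma pr_congr (p : Traj S A T → ℝ) {E F : Traj S A T → Prop}
    (h : ∀ τ, E τ ↔ F τ) : pr p E = pr p F := by
  unfold pr
  exact Finset.sum_congr rfl (fun τ _ => by rw [if_congr (h τ) rfl rfl])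

lemma pr_single (p : Traj S A T → ℝ) (τ : Traj S A T) (Q : Traj S A T → Prop) :
    pr p (fun τ' => τ' = τ ∧ Q τ') = if Q τ then p τ else 0 := by
  unfold pr
  rw [Finset.sum_eq_single τ]
  · simp
  · intro τ' _ hne; simp [hne]
  · simp

lemma histEq_zero {T : ℕ} (τ τ' : Traj S A T) :
    histEq τ τ' 0 ↔ τ'.1 0 = τ.1 0 := by
  constructor
  · intro h; exact h.1 0 (le_refl 0)
  · intro h
    refine ⟨fun i hi => ?_, fun j hj => absurd hj (Nat.not_lt_zero _)⟩
    have hi0 : i = 0 := by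
      apply Fin.ext; simpa using Nat.le_zero.mp hi
    rw [hi0]; exact h

lemma histEq_top {T : ℕ} (τ τ' : Traj S A T) :
    histEq τ τ' T ↔ τ' = τ := by
  constructor
  · intro h
    apply Prod.ext
    · funext i; exact h.1 i (Nat.lt_succ_iff.mp i.isLt)
    · funext j; exact h.2 j j.isLt
  · intro h; subst h; exact ⟨fun _ _ => rfl, fun _ _ => rfl⟩

lemma histActEq_iff {T : ℕ} (τ τ' : Traj S A T) (t : Fin T) :
    histActEq τ τ' t ↔ histEq τ τ' t ∧ τ'.2 t = τ.2 t := by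
  constructor
  · intro h; exact ⟨h.1, h.2 t le_rfl⟩
  · rintro ⟨h1, h2⟩
    refine ⟨h1, fun j hj => ?_⟩
    rcases Nat.lt_or_ge (j : ℕ) (t : ℕ) with hlt | hge
    · exact h1.2 j hlt
    · have : j = t := Fin.ext (le_antisymm hj hge)
      rw [this]; exact h2

lemma histEq_succ_iff {T : ℕ} (τ τ' : Traj S A T) (t : Fin T) :
    histEq τ τ' ((t : ℕ) + 1) ↔
      histActEq τ τ' t ∧ τ'.1 t.succ = τ.1 t.succ := by
  constructor
  · intro h
    refine ⟨⟨⟨fun i hi => h.1 i (hi.trans (Nat.le_succ _)),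
        fun j hj => h.2 j (hj.trans (Nat.lt_succ_self _))⟩,
        fun j hj => h.2 j (Nat.lt_succ_of_le hj)⟩,
      h.1 t.succ (by simp)⟩
  · rintro ⟨h1, h2⟩
    refine ⟨fun i hi => ?_, fun j hj => h1.2 j (Nat.lt_succ_iff.mp hj)⟩
    rcases Nat.lt_or_ge (i : ℕ) ((t : ℕ) + 1) with hlt | hge
    · exact h1.1.1 i (Nat.lt_succ_iff.mp hlt)
    · have : i = t.succ := by
        apply Fin.ext
        simp only [Fin.val_succ]
        omega
      rw [this]; exact h2

end Aux

/-- If the statistic `I` is independent of every environment transition given the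
history and action, then the rollout of the conditional policy equals
`p(τ | s₀, I = z)`, and consequently the rollout achieves `I = z` almost surely
(the goal `z` is consistently achievable). -/
theorem stmt_10 {S A G : Type} [Fintype S] [Fintype A] {T : ℕ}
    (p : Traj S A T → ℝ) (I : Traj S A T → G) (z : G) (s0 : S)
    (hp : ∀ τ, 0 ≤ p τ) (hsum : ∑ τ, p τ = 1)
    (hz : 0 < pr p (fun τ => τ.1 0 = s0 ∧ I τ = z))
    (hind : ∀ (τ : Traj S A T) (t : Fin T) (s' : S),
      0 < pr p (fun τ' => histActEq τ τ' t ∧ I τ' = z) →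
      transCond p I z τ t s' = trans p τ t s') :
    (∀ τ, rollout p I z s0 τ =
      (if τ.1 0 = s0 ∧ I τ = z then p τ else 0) /
        pr p (fun τ' => τ'.1 0 = s0 ∧ I τ' = z)) ∧
    (∀ τ, 0 < rollout p I z s0 τ → I τ = z) := by
  have main : ∀ τ, rollout p I z s0 τ =
      (if τ.1 0 = s0 ∧ I τ = z then p τ else 0) /
        pr p (fun τ' => τ'.1 0 = s0 ∧ I τ' = z) := by
    intro τ
    set Z := pr p (fun τ' => τ'.1 0 = s0 ∧ I τ' = z) with hZ
    by_cases h0 : τ.1 0 = s0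
    · -- main case
      set b : ℕ → ℝ := fun n => pr p (fun τ' => histEq τ τ' n ∧ I τ' = z) with hb
      set a : Fin T → ℝ := fun t => pr p (fun τ' => histActEq τ τ' t ∧ I τ' = z) with ha
      have hb0 : b 0 = Z := by
        rw [hb, hZ]
        apply pr_congr
        intro τ'
        rw [histEq_zero, h0]
      have hb0pos : 0 < b 0 := hb0 ▸ hz
      have hbT : b T = if I τ = z then p τ else 0 := by
        show pr p (fun τ' => histEq τ τ' T ∧ I τ' = z) = _
        rw [pr_congr p (F := fun τ' => τ' = τ ∧ I τ' = z)
          (fun τ' => by rw [histEq_top])]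
        exact pr_single p τ _
      have hab : ∀ t : Fin T, a t ≤ b t :=
        fun t => pr_mono p hp (fun τ' h => ⟨h.1.1, h.2⟩)
      have hba : ∀ t : Fin T, b ((t : ℕ) + 1) ≤ a t :=
        fun t => pr_mono p hp (fun τ' h =>
          ⟨((histEq_succ_iff τ τ' t).mp h.1).1, h.2⟩)
      have hbnn : ∀ n, 0 ≤ b n := fun n => pr_nonneg p hp _
      have hann : ∀ t, 0 ≤ a t := fun t => pr_nonneg p hp _
      have hcond : ∀ t : Fin T, condPolicy p I z τ t (τ.2 t) = a t / b t := by
        intro t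
        unfold condPolicy
        congr 1
        apply pr_congr
        intro τ'
        rw [histActEq_iff]
        tauto
      have htransC : ∀ t : Fin T,
          transCond p I z τ t (τ.1 t.succ) = b ((t : ℕ) + 1) / a t := by
        intro t
        unfold transCond
        congr 1
        apply pr_congr
        intro τ'
        rw [histEq_succ_iff]
        tauto
      -- key telescoping step
      have key : ∀ t : Fin T,
          (b t / b 0) * (condPolicy p I z τ t (τ.2 t) * trans p τ t (τ.1 t.succ))
            = b ((t : ℕ) + 1) / b 0 := by
        intro t
        rcases eq_or_lt_of_le (hbnn t) with hbt | hbt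
        · have hbt1 : b ((t : ℕ) + 1) = 0 :=
            le_antisymm (by calc b ((t:ℕ)+1) ≤ a t := hba t
                              _ ≤ b t := hab t
                              _ = 0 := hbt.symm) (hbnn _)
          rw [← hbt, hbt1]
          simp
        · rcases eq_or_lt_of_le (hann t) with hat | hat
          · have hbt1 : b ((t : ℕ) + 1) = 0 :=
              le_antisymm (hat ▸ hba t) (hbnn _)
            rw [hcond t, ← hat, hbt1]
            simp
          · have htr : trans p τ t (τ.1 t.succ) = b ((t : ℕ) + 1) / a t := by
              rw [← htransC t]
              rw [hind τ t _ hat]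
            rw [hcond t, htr]
            have h1 : b (t : ℕ) ≠ 0 := ne_of_gt hbt
            have h2 : a t ≠ 0 := ne_of_gt hat
            calc (b t / b 0) * (a t / b t * (b ((t:ℕ)+1) / a t))
                = (b ((t:ℕ)+1) / b 0) * ((b t / b t) * (a t / a t)) := by ring
              _ = b ((t:ℕ)+1) / b 0 := by rw [div_self h1, div_self h2]; ring
      -- the product telescopes
      classical
      set g : ℕ → ℝ := fun n =>
        if h : n < T then
          condPolicy p I z τ ⟨n, h⟩ (τ.2 ⟨n, h⟩) *
            trans p τ ⟨n, h⟩ (τ.1 (Fin.succ ⟨n, h⟩))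
        else 1 with hg
      have hprodg : (∏ t : Fin T,
          condPolicy p I z τ t (τ.2 t) * trans p τ t (τ.1 t.succ))
            = ∏ n ∈ Finset.range T, g n := by
        rw [← Fin.prod_univ_eq_prod_range g T]
        apply Finset.prod_congr rfl
        intro t _
        rw [hg]
        simp only [t.isLt, dif_pos]
      have htel : ∀ n, n ≤ T → (∏ k ∈ Finset.range n, g k) = b n / b 0 := by
        intro n
        induction n with
        | zero => intro _; simp [div_self (ne_of_gt hb0pos)]
        | succ n ih =>
          intro hn
          have hnT : n < T := hn
          rw [Finset.prod_range_succ, ih (le_of_lt hnT)]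
          have := key ⟨n, hnT⟩
          simp only at this
          rw [hg]
          simp only [hnT, dif_pos]
          exact this
      have hroll : rollout p I z s0 τ = b T / b 0 := by
        unfold rollout
        rw [if_pos h0, one_mul, hprodg, htel T le_rfl]
      rw [hroll, hbT, hb0]
      congr 1
      simp [h0]
    · -- initial state mismatch: both sides vanish
      unfold rollout
      rw [if_neg h0, zero_mul, if_neg (fun hc => h0 hc.1), zero_div]
  refine ⟨main, fun τ hpos => ?_⟩
  by_contra hIz
  rw [main τ, if_neg (fun hc => hIz hc.2), zero_div] at hpos
  exact lt_irrefl 0 hpos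

end Stmt10
end
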